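/- Let r = a₁ K∧P + a₂ K∧M + a₃ K∧H + a₄ P∧M + a₅ P∧H + a₆ M∧H ∈ 𝔤⊗𝔤. Then [[r,r]] is ad-invariant, i.e. [X⊗1⊗1 + 1⊗X⊗1 + 1⊗1⊗X, [[r,r]]] = 0 in U(𝔤)⊗U(𝔤)⊗U(𝔤) for all X ∈ 𝔤 (the modified classical Yang–Baxter equation), if and only if a₃ = 0; and in that case [[r,r]] = a₁² K∧P∧M + a₁a₅ P∧H∧M. -/

import Mathlib

open scoped TensorProduct

set_option synthInstance.maxHeartbeats 1000000
set_option maxHeartbeats 4000000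

noncomputable section

variable {L : Type} [LieRing L] [LieAlgebra ℝ L]

/-- The canonical embedding `ι : 𝔤 → U(𝔤)`. -/
def ue (x : L) : UniversalEnvelopingAlgebra ℝ L := UniversalEnvelopingAlgebra.ι ℝ x

/-- `ι(x)⊗ι(y)⊗ι(z) ∈ U(𝔤)⊗U(𝔤)⊗U(𝔤)`. -/
def t3 (x y z : L) :
    UniversalEnvelopingAlgebra ℝ L ⊗[ℝ] (UniversalEnvelopingAlgebra ℝ L ⊗[ℝ]
      UniversalEnvelopingAlgebra ℝ L) :=
  ue x ⊗ₜ[ℝ] (ue y ⊗ₜ[ℝ] ue z)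

/-- Full antisymmetrization `x∧y∧z = Σ_{σ∈S₃} sgn(σ) x_{σ(1)}⊗x_{σ(2)}⊗x_{σ(3)}`. -/
def w3 (x y z : L) :
    UniversalEnvelopingAlgebra ℝ L ⊗[ℝ] (UniversalEnvelopingAlgebra ℝ L ⊗[ℝ]
      UniversalEnvelopingAlgebra ℝ L) :=
  t3 x y z - t3 x z y + t3 y z x - t3 y x z + t3 z x y - t3 z y x

/-- `(x∧y)₁₂ = x⊗y⊗1 − y⊗x⊗1`. -/
def w12 (x y : L) :
    UniversalEnvelopingAlgebra ℝ L ⊗[ℝ] (UniversalEnvelopingAlgebra ℝ L ⊗[ℝ]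
      UniversalEnvelopingAlgebra ℝ L) :=
  ue x ⊗ₜ[ℝ] (ue y ⊗ₜ[ℝ] (1 : UniversalEnvelopingAlgebra ℝ L)) -
    ue y ⊗ₜ[ℝ] (ue x ⊗ₜ[ℝ] (1 : UniversalEnvelopingAlgebra ℝ L))

/-- `(x∧y)₁₃ = x⊗1⊗y − y⊗1⊗x`. -/
def w13 (x y : L) :
    UniversalEnvelopingAlgebra ℝ L ⊗[ℝ] (UniversalEnvelopingAlgebra ℝ L ⊗[ℝ]
      UniversalEnvelopingAlgebra ℝ L) :=
  ue x ⊗ₜ[ℝ] ((1 : UniversalEnvelopingAlgebra ℝ L) ⊗ₜ[ℝ] ue y) -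
    ue y ⊗ₜ[ℝ] ((1 : UniversalEnvelopingAlgebra ℝ L) ⊗ₜ[ℝ] ue x)

/-- `(x∧y)₂₃ = 1⊗x⊗y − 1⊗y⊗x`. -/
def w23 (x y : L) :
    UniversalEnvelopingAlgebra ℝ L ⊗[ℝ] (UniversalEnvelopingAlgebra ℝ L ⊗[ℝ]
      UniversalEnvelopingAlgebra ℝ L) :=
  (1 : UniversalEnvelopingAlgebra ℝ L) ⊗ₜ[ℝ] (ue x ⊗ₜ[ℝ] ue y) -
    (1 : UniversalEnvelopingAlgebra ℝ L) ⊗ₜ[ℝ] (ue y ⊗ₜ[ℝ] ue x)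

/-! ### Auxiliary machinery -/

/-- The "diagonal" element `X⊗1⊗1 + 1⊗X⊗1 + 1⊗1⊗X`. -/
def dd (X : L) :
    UniversalEnvelopingAlgebra ℝ L ⊗[ℝ] (UniversalEnvelopingAlgebra ℝ L ⊗[ℝ]
      UniversalEnvelopingAlgebra ℝ L) :=
  ue X ⊗ₜ[ℝ] ((1 : UniversalEnvelopingAlgebra ℝ L) ⊗ₜ[ℝ] (1 : UniversalEnvelopingAlgebra ℝ L)) +
    (1 : UniversalEnvelopingAlgebra ℝ L) ⊗ₜ[ℝ]
      (ue X ⊗ₜ[ℝ] (1 : UniversalEnvelopingAlgebra ℝ L)) +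
    (1 : UniversalEnvelopingAlgebra ℝ L) ⊗ₜ[ℝ]
      ((1 : UniversalEnvelopingAlgebra ℝ L) ⊗ₜ[ℝ] ue X)

section
attribute [local instance] LieRing.ofAssociativeRing
lemma ue_mul_sub (x y : L) : ue x * ue y - ue y * ue x = ue ⁅x, y⁆ := by
  rw [ue, ue, ue, LieHom.map_lie, Ring.lie_def]
end

lemma ue_bracket (x y : L) : ue ⁅x, y⁆ = ue x * ue y - ue y * ue x := (ue_mul_sub x y).symm

lemma ue_zero : ue (0 : L) = 0 := by simp [ue]
lemma ue_neg (x : L) : ue (-x) = - ue x := by simp [ue]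
lemma ue_smul (c : ℝ) (x : L) : ue (c • x) = c • ue x := by simp [ue]
lemma ue_add (x y : L) : ue (x + y) = ue x + ue y := by simp [ue]

lemma comm_t3 (X x y z : L) :
    dd X * t3 x y z = t3 x y z * dd X + (t3 ⁅X, x⁆ y z + t3 x ⁅X, y⁆ z + t3 x y ⁅X, z⁆) := by
  simp only [dd, t3, add_mul, mul_add, Algebra.TensorProduct.tmul_mul_tmul, one_mul, mul_one,
    ue_bracket]
  simp only [TensorProduct.sub_tmul, TensorProduct.tmul_sub]
  abel

lemma comm_w3 (X x y z : L) :
    dd X * w3 x y z = w3 x y z * dd X + (w3 ⁅X, x⁆ y z + w3 x ⁅X, y⁆ z + w3 x y ⁅X, z⁆) := by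
  simp only [w3, mul_sub, sub_mul, mul_add, add_mul, comm_t3]
  abel

lemma w3_swap13 (x y z : L) : w3 z y x = - w3 x y z := by
  simp only [w3]; abel

lemma w3_xx (x z : L) : w3 x x z = 0 := by simp only [w3]; abel
lemma w3_yy (x y : L) : w3 x y y = 0 := by simp only [w3]; abel
lemma w3_xzx (x y : L) : w3 x y x = 0 := by simp only [w3]; abel

lemma t3_zero1 (y z : L) : t3 0 y z = 0 := by simp [t3, ue_zero]
lemma t3_zero2 (x z : L) : t3 x 0 z = 0 := by simp [t3, ue_zero]
lemma t3_zero3 (x y : L) : t3 x y 0 = 0 := by simp [t3, ue_zero]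

lemma w3_zero1 (y z : L) : w3 (0:L) y z = 0 := by
  simp [w3, t3_zero1, t3_zero2, t3_zero3]
lemma w3_zero2 (x z : L) : w3 x (0:L) z = 0 := by
  simp [w3, t3_zero1, t3_zero2, t3_zero3]
lemma w3_zero3 (x y : L) : w3 x y (0:L) = 0 := by
  simp [w3, t3_zero1, t3_zero2, t3_zero3]

lemma w3_neg1 (x y z : L) : w3 (-x) y z = - w3 x y z := by
  simp only [w3, t3, ue_neg, TensorProduct.neg_tmul, TensorProduct.tmul_neg]; abel

/-! ### The three partial commutators of the Schouten bracket -/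

section partials

variable (K H P M : L)

lemma comm1213
    (hKH : ⁅K, H⁆ = P) (hKP : ⁅K, P⁆ = M) (hHP : ⁅H, P⁆ = (0 : L))
    (hMK : ⁅M, K⁆ = (0 : L)) (hMH : ⁅M, H⁆ = (0 : L)) (hMP : ⁅M, P⁆ = (0 : L))
    (a₁ a₂ a₃ a₄ a₅ a₆ : ℝ) :
      (a₁ • w12 K P + a₂ • w12 K M + a₃ • w12 K H + a₄ • w12 P M +
          a₅ • w12 P H + a₆ • w12 M H) *
      (a₁ • w13 K P + a₂ • w13 K M + a₃ • w13 K H + a₄ • w13 P M +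
          a₅ • w13 P H + a₆ • w13 M H) -
      (a₁ • w13 K P + a₂ • w13 K M + a₃ • w13 K H + a₄ • w13 P M +
          a₅ • w13 P H + a₆ • w13 M H) *
      (a₁ • w12 K P + a₂ • w12 K M + a₃ • w12 K H + a₄ • w12 P M +
          a₅ • w12 P H + a₆ • w12 M H)
      = (-(a₁*a₄)) • t3 M M P + (a₂*a₅ - a₃*a₄) • t3 M M H + (-(a₁*a₂)) • t3 M M K
      + (a₁*a₄) • t3 M P M + (a₁*a₅) • t3 M P H + (-(a₁^2)) • t3 M P K
      + (a₃*a₄ - a₂*a₅) • t3 M H M + (-(a₁*a₅)) • t3 M H P + (-(a₁*a₃)) • t3 M H K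
      + (a₁*a₂) • t3 M K M + (a₁^2) • t3 M K P + (a₁*a₃) • t3 M K H
      + (a₁*a₆ - a₂*a₅) • t3 P M P + (a₃*a₆) • t3 P M H + (-(a₂*a₃)) • t3 P M K
      + (a₂*a₅ - a₁*a₆) • t3 P P M + (a₃*a₅) • t3 P P H + (-(a₁*a₃)) • t3 P P K
      + (-(a₃*a₆)) • t3 P H M + (-(a₃*a₅)) • t3 P H P + (-(a₃^2)) • t3 P H K
      + (a₂*a₃) • t3 P K M + (a₁*a₃) • t3 P K P + (a₃^2) • t3 P K H := by
  have cHK : ue H * ue K = ue K * ue H - ue P := by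
    rw [eq_sub_iff_add_eq, ← eq_sub_iff_add_eq', ue_mul_sub, hKH]
  have cPK : ue P * ue K = ue K * ue P - ue M := by
    rw [eq_sub_iff_add_eq, ← eq_sub_iff_add_eq', ue_mul_sub, hKP]
  have cPH : ue P * ue H = ue H * ue P := by
    have := ue_mul_sub H P; rw [hHP, ue_zero, sub_eq_zero] at this; exact this.symm
  have cKM : ue M * ue K = ue K * ue M := by
    have := ue_mul_sub M K; rw [hMK, ue_zero, sub_eq_zero] at this; exact this
  have cHM : ue M * ue H = ue H * ue M := by
    have := ue_mul_sub M H; rw [hMH, ue_zero, sub_eq_zero] at this; exact this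
  have cPM : ue M * ue P = ue P * ue M := by
    have := ue_mul_sub M P; rw [hMP, ue_zero, sub_eq_zero] at this; exact this
  simp only [w12, w13, t3, add_mul, mul_add, sub_mul, mul_sub,
    smul_mul_assoc, mul_smul_comm, Algebra.TensorProduct.tmul_mul_tmul, one_mul, mul_one,
    cHK, cPK, cPH, cKM, cHM, cPM]
  simp only [TensorProduct.sub_tmul, TensorProduct.tmul_sub, TensorProduct.add_tmul,
    TensorProduct.tmul_add, smul_sub, smul_add]
  module

lemma comm1223
    (hKH : ⁅K, H⁆ = P) (hKP : ⁅K, P⁆ = M) (hHP : ⁅H, P⁆ = (0 : L))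
    (hMK : ⁅M, K⁆ = (0 : L)) (hMH : ⁅M, H⁆ = (0 : L)) (hMP : ⁅M, P⁆ = (0 : L))
    (a₁ a₂ a₃ a₄ a₅ a₆ : ℝ) :
      (a₁ • w12 K P + a₂ • w12 K M + a₃ • w12 K H + a₄ • w12 P M +
          a₅ • w12 P H + a₆ • w12 M H) *
      (a₁ • w23 K P + a₂ • w23 K M + a₃ • w23 K H + a₄ • w23 P M +
          a₅ • w23 P H + a₆ • w23 M H) -
      (a₁ • w23 K P + a₂ • w23 K M + a₃ • w23 K H + a₄ • w23 P M +
          a₅ • w23 P H + a₆ • w23 M H) *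
      (a₁ • w12 K P + a₂ • w12 K M + a₃ • w12 K H + a₄ • w12 P M +
          a₅ • w12 P H + a₆ • w12 M H)
      = (a₁*a₄) • t3 M M P + (a₃*a₄ - a₂*a₅) • t3 M M H + (a₁*a₂) • t3 M M K
      + (a₂*a₅ - a₁*a₆) • t3 M P P + (-(a₃*a₆)) • t3 M P H + (a₂*a₃) • t3 M P K
      + (-(a₁*a₄)) • t3 P M M + (-(a₁*a₅)) • t3 P M H + (a₁^2) • t3 P M K
      + (a₁*a₆ - a₂*a₅) • t3 P P M + (-(a₃*a₅)) • t3 P P H + (a₁*a₃) • t3 P P K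
      + (a₂*a₅ - a₃*a₄) • t3 H M M + (a₁*a₅) • t3 H M P + (a₁*a₃) • t3 H M K
      + (a₃*a₆) • t3 H P M + (a₃*a₅) • t3 H P P + (a₃^2) • t3 H P K
      + (-(a₁*a₂)) • t3 K M M + (-(a₁^2)) • t3 K M P + (-(a₁*a₃)) • t3 K M H
      + (-(a₂*a₃)) • t3 K P M + (-(a₁*a₃)) • t3 K P P + (-(a₃^2)) • t3 K P H := by
  have cHK : ue H * ue K = ue K * ue H - ue P := by
    rw [eq_sub_iff_add_eq, ← eq_sub_iff_add_eq', ue_mul_sub, hKH]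
  have cPK : ue P * ue K = ue K * ue P - ue M := by
    rw [eq_sub_iff_add_eq, ← eq_sub_iff_add_eq', ue_mul_sub, hKP]
  have cPH : ue P * ue H = ue H * ue P := by
    have := ue_mul_sub H P; rw [hHP, ue_zero, sub_eq_zero] at this; exact this.symm
  have cKM : ue M * ue K = ue K * ue M := by
    have := ue_mul_sub M K; rw [hMK, ue_zero, sub_eq_zero] at this; exact this
  have cHM : ue M * ue H = ue H * ue M := by
    have := ue_mul_sub M H; rw [hMH, ue_zero, sub_eq_zero] at this; exact this
  have cPM : ue M * ue P = ue P * ue M := by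
    have := ue_mul_sub M P; rw [hMP, ue_zero, sub_eq_zero] at this; exact this
  simp only [w12, w23, t3, add_mul, mul_add, sub_mul, mul_sub,
    smul_mul_assoc, mul_smul_comm, Algebra.TensorProduct.tmul_mul_tmul, one_mul, mul_one,
    cHK, cPK, cPH, cKM, cHM, cPM]
  simp only [TensorProduct.sub_tmul, TensorProduct.tmul_sub, TensorProduct.add_tmul,
    TensorProduct.tmul_add, smul_sub, smul_add]
  module

lemma comm1323
    (hKH : ⁅K, H⁆ = P) (hKP : ⁅K, P⁆ = M) (hHP : ⁅H, P⁆ = (0 : L))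
    (hMK : ⁅M, K⁆ = (0 : L)) (hMH : ⁅M, H⁆ = (0 : L)) (hMP : ⁅M, P⁆ = (0 : L))
    (a₁ a₂ a₃ a₄ a₅ a₆ : ℝ) :
      (a₁ • w13 K P + a₂ • w13 K M + a₃ • w13 K H + a₄ • w13 P M +
          a₅ • w13 P H + a₆ • w13 M H) *
      (a₁ • w23 K P + a₂ • w23 K M + a₃ • w23 K H + a₄ • w23 P M +
          a₅ • w23 P H + a₆ • w23 M H) -
      (a₁ • w23 K P + a₂ • w23 K M + a₃ • w23 K H + a₄ • w23 P M +
          a₅ • w23 P H + a₆ • w23 M H) *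
      (a₁ • w13 K P + a₂ • w13 K M + a₃ • w13 K H + a₄ • w13 P M +
          a₅ • w13 P H + a₆ • w13 M H)
      = (-(a₁*a₄)) • t3 M P M + (a₁*a₆ - a₂*a₅) • t3 M P P
      + (a₂*a₅ - a₃*a₄) • t3 M H M + (a₃*a₆) • t3 M H P
      + (-(a₁*a₂)) • t3 M K M + (-(a₂*a₃)) • t3 M K P
      + (a₁*a₄) • t3 P M M + (a₂*a₅ - a₁*a₆) • t3 P M P
      + (a₁*a₅) • t3 P H M + (a₃*a₅) • t3 P H P
      + (-(a₁^2)) • t3 P K M + (-(a₁*a₃)) • t3 P K P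
      + (a₃*a₄ - a₂*a₅) • t3 H M M + (-(a₃*a₆)) • t3 H M P
      + (-(a₁*a₅)) • t3 H P M + (-(a₃*a₅)) • t3 H P P
      + (-(a₁*a₃)) • t3 H K M + (-(a₃^2)) • t3 H K P
      + (a₁*a₂) • t3 K M M + (a₂*a₃) • t3 K M P
      + (a₁^2) • t3 K P M + (a₁*a₃) • t3 K P P
      + (a₁*a₃) • t3 K H M + (a₃^2) • t3 K H P := by
  have cHK : ue H * ue K = ue K * ue H - ue P := by
    rw [eq_sub_iff_add_eq, ← eq_sub_iff_add_eq', ue_mul_sub, hKH]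
  have cPK : ue P * ue K = ue K * ue P - ue M := by
    rw [eq_sub_iff_add_eq, ← eq_sub_iff_add_eq', ue_mul_sub, hKP]
  have cPH : ue P * ue H = ue H * ue P := by
    have := ue_mul_sub H P; rw [hHP, ue_zero, sub_eq_zero] at this; exact this.symm
  have cKM : ue M * ue K = ue K * ue M := by
    have := ue_mul_sub M K; rw [hMK, ue_zero, sub_eq_zero] at this; exact this
  have cHM : ue M * ue H = ue H * ue M := by
    have := ue_mul_sub M H; rw [hMH, ue_zero, sub_eq_zero] at this; exact this
  have cPM : ue M * ue P = ue P * ue M := by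
    have := ue_mul_sub M P; rw [hMP, ue_zero, sub_eq_zero] at this; exact this
  simp only [w13, w23, t3, add_mul, mul_add, sub_mul, mul_sub,
    smul_mul_assoc, mul_smul_comm, Algebra.TensorProduct.tmul_mul_tmul, one_mul, mul_one,
    cHK, cPK, cPH, cKM, cHM, cPM]
  simp only [TensorProduct.sub_tmul, TensorProduct.tmul_sub, TensorProduct.add_tmul,
    TensorProduct.tmul_add, smul_sub, smul_add]
  module

lemma sch_closed
    (hKH : ⁅K, H⁆ = P) (hKP : ⁅K, P⁆ = M) (hHP : ⁅H, P⁆ = (0 : L))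
    (hMK : ⁅M, K⁆ = (0 : L)) (hMH : ⁅M, H⁆ = (0 : L)) (hMP : ⁅M, P⁆ = (0 : L))
    (a₁ a₂ a₃ a₄ a₅ a₆ : ℝ) :
      ((a₁ • w12 K P + a₂ • w12 K M + a₃ • w12 K H + a₄ • w12 P M +
          a₅ • w12 P H + a₆ • w12 M H) *
       (a₁ • w13 K P + a₂ • w13 K M + a₃ • w13 K H + a₄ • w13 P M +
          a₅ • w13 P H + a₆ • w13 M H) -
       (a₁ • w13 K P + a₂ • w13 K M + a₃ • w13 K H + a₄ • w13 P M +
          a₅ • w13 P H + a₆ • w13 M H) *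
       (a₁ • w12 K P + a₂ • w12 K M + a₃ • w12 K H + a₄ • w12 P M +
          a₅ • w12 P H + a₆ • w12 M H)) +
      ((a₁ • w12 K P + a₂ • w12 K M + a₃ • w12 K H + a₄ • w12 P M +
          a₅ • w12 P H + a₆ • w12 M H) *
       (a₁ • w23 K P + a₂ • w23 K M + a₃ • w23 K H + a₄ • w23 P M +
          a₅ • w23 P H + a₆ • w23 M H) -
       (a₁ • w23 K P + a₂ • w23 K M + a₃ • w23 K H + a₄ • w23 P M +
          a₅ • w23 P H + a₆ • w23 M H) *
       (a₁ • w12 K P + a₂ • w12 K M + a₃ • w12 K H + a₄ • w12 P M +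
          a₅ • w12 P H + a₆ • w12 M H)) +
      ((a₁ • w13 K P + a₂ • w13 K M + a₃ • w13 K H + a₄ • w13 P M +
          a₅ • w13 P H + a₆ • w13 M H) *
       (a₁ • w23 K P + a₂ • w23 K M + a₃ • w23 K H + a₄ • w23 P M +
          a₅ • w23 P H + a₆ • w23 M H) -
       (a₁ • w23 K P + a₂ • w23 K M + a₃ • w23 K H + a₄ • w23 P M +
          a₅ • w23 P H + a₆ • w23 M H) *
       (a₁ • w13 K P + a₂ • w13 K M + a₃ • w13 K H + a₄ • w13 P M +
          a₅ • w13 P H + a₆ • w13 M H))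
      = (a₁^2 - a₂*a₃) • w3 K P M + (a₁*a₅ - a₃*a₆) • w3 P H M
        + (a₃^2) • w3 K H P + (a₁*a₃) • w3 K H M := by
  rw [comm1213 K H P M hKH hKP hHP hMK hMH hMP a₁ a₂ a₃ a₄ a₅ a₆,
      comm1223 K H P M hKH hKP hHP hMK hMH hMP a₁ a₂ a₃ a₄ a₅ a₆,
      comm1323 K H P M hKH hKP hHP hMK hMH hMP a₁ a₂ a₃ a₄ a₅ a₆]
  simp only [w3]
  module

end partials

/-! ### A faithful 4×4 matrix representation, detecting `w3 P H M` -/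

def mats : Fin 4 → Matrix (Fin 4) (Fin 4) ℝ :=
  ![!![0,0,0,0; 0,0,0,0; 0,1,0,0; 0,0,1,0],
    !![0,0,0,0; 1,0,0,0; 0,0,0,0; 0,0,0,0],
    !![0,0,0,0; 0,0,0,0; 1,0,0,0; 0,0,0,0],
    !![0,0,0,0; 0,0,0,0; 0,0,0,0; 1,0,0,0]]

lemma mm01 : mats 0 * mats 1 - mats 1 * mats 0 = mats 2 := by
  ext a c
  fin_cases a <;> fin_cases c <;>
    simp [mats, Matrix.mul_apply, Fin.sum_univ_four, Matrix.vecHead, Matrix.vecTail]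

lemma mm02 : mats 0 * mats 2 - mats 2 * mats 0 = mats 3 := by
  ext a c
  fin_cases a <;> fin_cases c <;>
    simp [mats, Matrix.mul_apply, Fin.sum_univ_four, Matrix.vecHead, Matrix.vecTail]

lemma mm12 : mats 1 * mats 2 - mats 2 * mats 1 = 0 := by
  ext a c
  fin_cases a <;> fin_cases c <;>
    simp [mats, Matrix.mul_apply, Fin.sum_univ_four, Matrix.vecHead, Matrix.vecTail]

lemma mm30 : mats 3 * mats 0 - mats 0 * mats 3 = 0 := by
  ext a c
  fin_cases a <;> fin_cases c <;>
    simp [mats, Matrix.mul_apply, Fin.sum_univ_four, Matrix.vecHead, Matrix.vecTail]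

lemma mm31 : mats 3 * mats 1 - mats 1 * mats 3 = 0 := by
  ext a c
  fin_cases a <;> fin_cases c <;>
    simp [mats, Matrix.mul_apply, Fin.sum_univ_four, Matrix.vecHead, Matrix.vecTail]

lemma mm32 : mats 3 * mats 2 - mats 2 * mats 3 = 0 := by
  ext a c
  fin_cases a <;> fin_cases c <;>
    simp [mats, Matrix.mul_apply, Fin.sum_univ_four, Matrix.vecHead, Matrix.vecTail]

def entryLM (i j : Fin 4) : Matrix (Fin 4) (Fin 4) ℝ →ₗ[ℝ] ℝ where
  toFun A := A i j
  map_add' _ _ := rfl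
  map_smul' _ _ := rfl

section
attribute [local instance] LieRing.ofAssociativeRing
lemma detect (K H P M : L) (b : Module.Basis (Fin 4) ℝ L)
    (hbK : b 0 = K) (hbH : b 1 = H) (hbP : b 2 = P) (hbM : b 3 = M)
    (hKH : ⁅K, H⁆ = P) (hKP : ⁅K, P⁆ = M) (hHP : ⁅H, P⁆ = (0 : L))
    (hMK : ⁅M, K⁆ = (0 : L)) (hMH : ⁅M, H⁆ = (0 : L)) (hMP : ⁅M, P⁆ = (0 : L)) :
    ∃ F : (UniversalEnvelopingAlgebra ℝ L ⊗[ℝ] (UniversalEnvelopingAlgebra ℝ L ⊗[ℝ]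
      UniversalEnvelopingAlgebra ℝ L)) →ₗ[ℝ] ℝ, F (w3 P H M) = 1 := by
  classical
  set ρ : L →ₗ[ℝ] Matrix (Fin 4) (Fin 4) ℝ := b.constr ℝ mats with hρ
  have hbases : ∀ i : Fin 4, ρ (b i) = mats i := fun i => b.constr_basis ℝ mats i
  have hHK : ⁅H, K⁆ = -P := by rw [← lie_skew, hKH]
  have hPK : ⁅P, K⁆ = -M := by rw [← lie_skew, hKP]
  have hPH : ⁅P, H⁆ = 0 := by rw [← lie_skew, hHP, neg_zero]
  have hKM : ⁅K, M⁆ = 0 := by rw [← lie_skew, hMK, neg_zero]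
  have hHM : ⁅H, M⁆ = 0 := by rw [← lie_skew, hMH, neg_zero]
  have hPM : ⁅P, M⁆ = 0 := by rw [← lie_skew, hMP, neg_zero]
  have hρK : ρ K = mats 0 := by rw [← hbK, hbases]
  have hρH : ρ H = mats 1 := by rw [← hbH, hbases]
  have hρP : ρ P = mats 2 := by rw [← hbP, hbases]
  have hρM : ρ M = mats 3 := by rw [← hbM, hbases]
  have c30 : mats 3 * mats 0 = mats 0 * mats 3 := by
    have := mm30; rwa [sub_eq_zero] at this
  have c31 : mats 3 * mats 1 = mats 1 * mats 3 := by
    have := mm31; rwa [sub_eq_zero] at this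
  have c32 : mats 3 * mats 2 = mats 2 * mats 3 := by
    have := mm32; rwa [sub_eq_zero] at this
  have c12 : mats 1 * mats 2 = mats 2 * mats 1 := by
    have := mm12; rwa [sub_eq_zero] at this
  have pair : ∀ i j : Fin 4, ρ ⁅b i, b j⁆ = ρ (b i) * ρ (b j) - ρ (b j) * ρ (b i) := by
    have p00 : ρ ⁅b 0, b 0⁆ = ρ (b 0) * ρ (b 0) - ρ (b 0) * ρ (b 0) := by
      rw [lie_self, map_zero, sub_self]
    have p11 : ρ ⁅b 1, b 1⁆ = ρ (b 1) * ρ (b 1) - ρ (b 1) * ρ (b 1) := by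
      rw [lie_self, map_zero, sub_self]
    have p22 : ρ ⁅b 2, b 2⁆ = ρ (b 2) * ρ (b 2) - ρ (b 2) * ρ (b 2) := by
      rw [lie_self, map_zero, sub_self]
    have p33 : ρ ⁅b 3, b 3⁆ = ρ (b 3) * ρ (b 3) - ρ (b 3) * ρ (b 3) := by
      rw [lie_self, map_zero, sub_self]
    have p01 : ρ ⁅b 0, b 1⁆ = ρ (b 0) * ρ (b 1) - ρ (b 1) * ρ (b 0) := by
      rw [hbK, hbH, hKH, hρP, hρK, hρH, mm01]
    have p10 : ρ ⁅b 1, b 0⁆ = ρ (b 1) * ρ (b 0) - ρ (b 0) * ρ (b 1) := by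
      rw [hbK, hbH, hHK, map_neg, hρP, hρK, hρH, ← mm01]; abel
    have p02 : ρ ⁅b 0, b 2⁆ = ρ (b 0) * ρ (b 2) - ρ (b 2) * ρ (b 0) := by
      rw [hbK, hbP, hKP, hρM, hρK, hρP, mm02]
    have p20 : ρ ⁅b 2, b 0⁆ = ρ (b 2) * ρ (b 0) - ρ (b 0) * ρ (b 2) := by
      rw [hbK, hbP, hPK, map_neg, hρM, hρK, hρP, ← mm02]; abel
    have p12 : ρ ⁅b 1, b 2⁆ = ρ (b 1) * ρ (b 2) - ρ (b 2) * ρ (b 1) := by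
      rw [hbH, hbP, hHP, map_zero, hρH, hρP, c12, sub_self]
    have p21 : ρ ⁅b 2, b 1⁆ = ρ (b 2) * ρ (b 1) - ρ (b 1) * ρ (b 2) := by
      rw [hbH, hbP, hPH, map_zero, hρH, hρP, ← c12, sub_self]
    have p03 : ρ ⁅b 0, b 3⁆ = ρ (b 0) * ρ (b 3) - ρ (b 3) * ρ (b 0) := by
      rw [hbK, hbM, hKM, map_zero, hρK, hρM, c30, sub_self]
    have p30 : ρ ⁅b 3, b 0⁆ = ρ (b 3) * ρ (b 0) - ρ (b 0) * ρ (b 3) := by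
      rw [hbK, hbM, hMK, map_zero, hρK, hρM, ← c30, sub_self]
    have p13 : ρ ⁅b 1, b 3⁆ = ρ (b 1) * ρ (b 3) - ρ (b 3) * ρ (b 1) := by
      rw [hbH, hbM, hHM, map_zero, hρH, hρM, c31, sub_self]
    have p31 : ρ ⁅b 3, b 1⁆ = ρ (b 3) * ρ (b 1) - ρ (b 1) * ρ (b 3) := by
      rw [hbH, hbM, hMH, map_zero, hρH, hρM, ← c31, sub_self]
    have p23 : ρ ⁅b 2, b 3⁆ = ρ (b 2) * ρ (b 3) - ρ (b 3) * ρ (b 2) := by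
      rw [hbP, hbM, hPM, map_zero, hρP, hρM, c32, sub_self]
    have p32 : ρ ⁅b 3, b 2⁆ = ρ (b 3) * ρ (b 2) - ρ (b 2) * ρ (b 3) := by
      rw [hbP, hbM, hMP, map_zero, hρP, hρM, ← c32, sub_self]
    intro i j
    fin_cases i <;> fin_cases j <;>
      first
      | exact p00 | exact p01 | exact p02 | exact p03
      | exact p10 | exact p11 | exact p12 | exact p13
      | exact p20 | exact p21 | exact p22 | exact p23
      | exact p30 | exact p31 | exact p32 | exact p33
  have key : ∀ x y : L, ρ ⁅x, y⁆ = ρ x * ρ y - ρ y * ρ x := by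
    let B1 : L →ₗ[ℝ] L →ₗ[ℝ] Matrix (Fin 4) (Fin 4) ℝ :=
      LinearMap.mk₂ ℝ (fun x y => ρ ⁅x, y⁆)
        (fun m n y => by simp only [add_lie, map_add])
        (fun c m y => by simp only [smul_lie, map_smul])
        (fun m y z => by simp only [lie_add, map_add])
        (fun c m y => by simp only [lie_smul, map_smul])
    let B2 : L →ₗ[ℝ] L →ₗ[ℝ] Matrix (Fin 4) (Fin 4) ℝ :=
      LinearMap.mk₂ ℝ (fun x y => ρ x * ρ y - ρ y * ρ x)
        (fun m n y => by simp only [map_add, add_mul, mul_add]; abel)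
        (fun c m y => by simp only [map_smul, smul_mul_assoc, mul_smul_comm, smul_sub])
        (fun m y z => by simp only [map_add, add_mul, mul_add]; abel)
        (fun c m y => by simp only [map_smul, smul_mul_assoc, mul_smul_comm, smul_sub])
    have hB : B1 = B2 := by
      apply b.ext; intro i
      apply b.ext; intro j
      exact pair i j
    intro x y
    exact LinearMap.congr_fun (LinearMap.congr_fun hB x) y
  let ρLie : L →ₗ⁅ℝ⁆ Matrix (Fin 4) (Fin 4) ℝ :=
    { toLinearMap := ρ, map_lie' := by intro x y; rw [Ring.lie_def]; exact key x y }
  let φ : UniversalEnvelopingAlgebra ℝ L →ₐ[ℝ] Matrix (Fin 4) (Fin 4) ℝ :=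
    UniversalEnvelopingAlgebra.lift ℝ ρLie
  have hφ : ∀ x : L, φ (ue x) = ρ x := fun x =>
    UniversalEnvelopingAlgebra.lift_ι_apply ℝ ρLie x
  let g : Fin 4 → Fin 4 → (UniversalEnvelopingAlgebra ℝ L →ₗ[ℝ] ℝ) :=
    fun i j => (entryLM i j).comp φ.toLinearMap
  let F : (UniversalEnvelopingAlgebra ℝ L ⊗[ℝ] (UniversalEnvelopingAlgebra ℝ L ⊗[ℝ]
      UniversalEnvelopingAlgebra ℝ L)) →ₗ[ℝ] ℝ :=
    (TensorProduct.lid ℝ ℝ).toLinearMap ∘ₗ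
      TensorProduct.map (g 2 0)
        ((TensorProduct.lid ℝ ℝ).toLinearMap ∘ₗ TensorProduct.map (g 1 0) (g 3 0))
  refine ⟨F, ?_⟩
  have hFt3 : ∀ x y z : L, F (t3 x y z) = (ρ x) 2 0 * ((ρ y) 1 0 * (ρ z) 3 0) := by
    intro x y z
    simp [F, t3, g, entryLM, hφ, TensorProduct.map_tmul, TensorProduct.lid_tmul,
      smul_eq_mul]
    rfl
  simp only [w3, map_sub, map_add, hFt3, hρP, hρH, hρM]
  simp [mats]

end

/-! ### ad-invariance computations -/

section ad

variable (K H P M : L)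

lemma gK1 (hKP : ⁅K, P⁆ = M) (hMK : ⁅M, K⁆ = (0 : L)) :
    dd K * w3 K P M = w3 K P M * dd K := by
  have hKM : ⁅K, M⁆ = 0 := by rw [← lie_skew, hMK, neg_zero]
  rw [comm_w3, lie_self, hKP, hKM, w3_zero1, w3_yy, w3_zero3]
  simp only [add_zero]

lemma gK2 (hKH : ⁅K, H⁆ = P) (hKP : ⁅K, P⁆ = M) (hMK : ⁅M, K⁆ = (0 : L)) :
    dd K * w3 P H M = w3 P H M * dd K := by
  have hKM : ⁅K, M⁆ = 0 := by rw [← lie_skew, hMK, neg_zero]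
  rw [comm_w3, hKP, hKH, hKM, w3_xzx, w3_xx, w3_zero3]
  simp only [add_zero]

lemma gH1 (hKH : ⁅K, H⁆ = P) (hHP : ⁅H, P⁆ = (0 : L)) (hMH : ⁅M, H⁆ = (0 : L)) :
    dd H * w3 K P M = w3 K P M * dd H := by
  have hHK : ⁅H, K⁆ = -P := by rw [← lie_skew, hKH]
  have hHM : ⁅H, M⁆ = 0 := by rw [← lie_skew, hMH, neg_zero]
  rw [comm_w3, hHK, hHP, hHM, w3_neg1, w3_xx, w3_zero2, w3_zero3]
  simp only [neg_zero, add_zero]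

lemma gH2 (hHP : ⁅H, P⁆ = (0 : L)) (hMH : ⁅M, H⁆ = (0 : L)) :
    dd H * w3 P H M = w3 P H M * dd H := by
  have hPH : ⁅H, P⁆ = 0 := hHP
  have hHM : ⁅H, M⁆ = 0 := by rw [← lie_skew, hMH, neg_zero]
  rw [comm_w3, hHP, lie_self, hHM, w3_zero1, w3_zero2, w3_zero3]
  simp only [add_zero]

lemma gP1 (hKP : ⁅K, P⁆ = M) (hMP : ⁅M, P⁆ = (0 : L)) :
    dd P * w3 K P M = w3 K P M * dd P := by
  have hPK : ⁅P, K⁆ = -M := by rw [← lie_skew, hKP]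
  have hPM : ⁅P, M⁆ = 0 := by rw [← lie_skew, hMP, neg_zero]
  rw [comm_w3, hPK, lie_self, hPM, w3_neg1, w3_xzx, w3_zero2, w3_zero3]
  simp only [neg_zero, add_zero]

lemma gP2 (hHP : ⁅H, P⁆ = (0 : L)) (hMP : ⁅M, P⁆ = (0 : L)) :
    dd P * w3 P H M = w3 P H M * dd P := by
  have hPH : ⁅P, H⁆ = 0 := by rw [← lie_skew, hHP, neg_zero]
  have hPM : ⁅P, M⁆ = 0 := by rw [← lie_skew, hMP, neg_zero]
  rw [comm_w3, lie_self, hPH, hPM, w3_zero1, w3_zero2, w3_zero3]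
  simp only [add_zero]

lemma gM1 (hMK : ⁅M, K⁆ = (0 : L)) (hMP : ⁅M, P⁆ = (0 : L)) :
    dd M * w3 K P M = w3 K P M * dd M := by
  rw [comm_w3, hMK, hMP, lie_self, w3_zero1, w3_zero2, w3_zero3]
  simp only [add_zero]

lemma gM2 (hMH : ⁅M, H⁆ = (0 : L)) (hMP : ⁅M, P⁆ = (0 : L)) :
    dd M * w3 P H M = w3 P H M * dd M := by
  rw [comm_w3, hMP, hMH, lie_self, w3_zero1, w3_zero2, w3_zero3]
  simp only [add_zero]

lemma pKHP (hKP : ⁅K, P⁆ = M) (hHP : ⁅H, P⁆ = (0 : L)) :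
    dd P * w3 K H P = w3 K H P * dd P + w3 P H M := by
  have hPK : ⁅P, K⁆ = -M := by rw [← lie_skew, hKP]
  have hPH : ⁅P, H⁆ = 0 := by rw [← lie_skew, hHP, neg_zero]
  rw [comm_w3, hPK, hPH, lie_self, w3_neg1, w3_swap13 P H M, w3_zero2, w3_zero3]
  simp only [neg_neg, add_zero]

lemma pKHM (hKP : ⁅K, P⁆ = M) (hHP : ⁅H, P⁆ = (0 : L)) (hMP : ⁅M, P⁆ = (0 : L)) :
    dd P * w3 K H M = w3 K H M * dd P := by
  have hPK : ⁅P, K⁆ = -M := by rw [← lie_skew, hKP]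
  have hPH : ⁅P, H⁆ = 0 := by rw [← lie_skew, hHP, neg_zero]
  have hPM : ⁅P, M⁆ = 0 := by rw [← lie_skew, hMP, neg_zero]
  rw [comm_w3, hPK, hPH, hPM, w3_neg1, w3_xzx, w3_zero2, w3_zero3]
  simp only [neg_zero, add_zero]

lemma adP_full
    (hKH : ⁅K, H⁆ = P) (hKP : ⁅K, P⁆ = M) (hHP : ⁅H, P⁆ = (0 : L))
    (hMK : ⁅M, K⁆ = (0 : L)) (hMH : ⁅M, H⁆ = (0 : L)) (hMP : ⁅M, P⁆ = (0 : L))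
    (c₁ c₂ c₃ c₄ : ℝ) :
    dd P * (c₁ • w3 K P M + c₂ • w3 P H M + c₃ • w3 K H P + c₄ • w3 K H M)
      - (c₁ • w3 K P M + c₂ • w3 P H M + c₃ • w3 K H P + c₄ • w3 K H M) * dd P
      = c₃ • w3 P H M := by
  simp only [mul_add, add_mul, mul_smul_comm, smul_mul_assoc,
    gP1 K P M hKP hMP, gP2 H P M hHP hMP, pKHP K H P M hKP hHP, pKHM K H P M hKP hHP hMP]
  simp only [smul_add]
  abel

end ad

/-- The Schouten bracket of `r = a₁K∧P + a₂K∧M + a₃K∧H + a₄P∧M + a₅P∧H + a₆M∧H`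
satisfies the modified classical Yang–Baxter equation (is ad-invariant) iff
`a₃ = 0`, in which case it equals `a₁² K∧P∧M + a₁a₅ P∧H∧M`. -/
theorem galilei_mCYBE_iff
    (K H P M : L) (b : Module.Basis (Fin 4) ℝ L)
    (hbK : b 0 = K) (hbH : b 1 = H) (hbP : b 2 = P) (hbM : b 3 = M)
    (hKH : ⁅K, H⁆ = P) (hKP : ⁅K, P⁆ = M) (hHP : ⁅H, P⁆ = (0 : L))
    (hMK : ⁅M, K⁆ = (0 : L)) (hMH : ⁅M, H⁆ = (0 : L)) (hMP : ⁅M, P⁆ = (0 : L))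
    (a₁ a₂ a₃ a₄ a₅ a₆ : ℝ) :
    ∀ r12 r13 r23 schouten :
        UniversalEnvelopingAlgebra ℝ L ⊗[ℝ] (UniversalEnvelopingAlgebra ℝ L ⊗[ℝ]
          UniversalEnvelopingAlgebra ℝ L),
      r12 = a₁ • w12 K P + a₂ • w12 K M + a₃ • w12 K H + a₄ • w12 P M +
          a₅ • w12 P H + a₆ • w12 M H →
      r13 = a₁ • w13 K P + a₂ • w13 K M + a₃ • w13 K H + a₄ • w13 P M +
          a₅ • w13 P H + a₆ • w13 M H →
      r23 = a₁ • w23 K P + a₂ • w23 K M + a₃ • w23 K H + a₄ • w23 P M +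
          a₅ • w23 P H + a₆ • w23 M H →
      schouten = (r12 * r13 - r13 * r12) + (r12 * r23 - r23 * r12) +
          (r13 * r23 - r23 * r13) →
      ((∀ X : L,
          (ue X ⊗ₜ[ℝ] ((1 : UniversalEnvelopingAlgebra ℝ L) ⊗ₜ[ℝ]
              (1 : UniversalEnvelopingAlgebra ℝ L)) +
            (1 : UniversalEnvelopingAlgebra ℝ L) ⊗ₜ[ℝ]
              (ue X ⊗ₜ[ℝ] (1 : UniversalEnvelopingAlgebra ℝ L)) +
            (1 : UniversalEnvelopingAlgebra ℝ L) ⊗ₜ[ℝ]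
              ((1 : UniversalEnvelopingAlgebra ℝ L) ⊗ₜ[ℝ] ue X)) * schouten -
          schouten *
          (ue X ⊗ₜ[ℝ] ((1 : UniversalEnvelopingAlgebra ℝ L) ⊗ₜ[ℝ]
              (1 : UniversalEnvelopingAlgebra ℝ L)) +
            (1 : UniversalEnvelopingAlgebra ℝ L) ⊗ₜ[ℝ]
              (ue X ⊗ₜ[ℝ] (1 : UniversalEnvelopingAlgebra ℝ L)) +
            (1 : UniversalEnvelopingAlgebra ℝ L) ⊗ₜ[ℝ]
              ((1 : UniversalEnvelopingAlgebra ℝ L) ⊗ₜ[ℝ] ue X)) = 0) ↔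
        a₃ = 0) ∧
      (a₃ = 0 → schouten = (a₁ ^ 2) • w3 K P M + (a₁ * a₅) • w3 P H M) := by
  intro r12 r13 r23 schouten h12 h13 h23 hs
  subst h12 h13 h23
  have hsch : schouten = (a₁^2 - a₂*a₃) • w3 K P M + (a₁*a₅ - a₃*a₆) • w3 P H M
      + (a₃^2) • w3 K H P + (a₁*a₃) • w3 K H M :=
    hs.trans (sch_closed K H P M hKH hKP hHP hMK hMH hMP a₁ a₂ a₃ a₄ a₅ a₆)
  clear hs
  constructor
  · constructor
    · -- ad-invariance → a₃ = 0
      intro hinv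
      have hP : dd P * schouten - schouten * dd P = 0 := hinv P
      rw [hsch, adP_full K H P M hKH hKP hHP hMK hMH hMP] at hP
      obtain ⟨F, hF⟩ := detect K H P M b hbK hbH hbP hbM hKH hKP hHP hMK hMH hMP
      have := congrArg F hP
      rw [map_smul, hF, map_zero, smul_eq_mul, mul_one] at this
      exact sq_eq_zero_iff.mp this
    · -- a₃ = 0 → ad-invariance
      intro h3 X
      show dd X * schouten - schouten * dd X = 0
      subst h3
      have hS2 : schouten = (a₁^2) • w3 K P M + (a₁*a₅) • w3 P H M := by
        rw [hsch]; module
      have hX : (b.repr X 0) • K + (b.repr X 1) • H + (b.repr X 2) • P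
          + (b.repr X 3) • M = X := by
        have := b.sum_repr X
        rwa [Fin.sum_univ_four, hbK, hbH, hbP, hbM] at this
      have ddadd : ∀ x y : L, dd (x + y) = dd x + dd y := by
        intro x y
        simp only [dd, ue_add, TensorProduct.add_tmul, TensorProduct.tmul_add]
        abel
      have ddsmul : ∀ (c : ℝ) (x : L), dd (c • x) = c • dd x := by
        intro c x
        simp only [dd, ue_smul, ← TensorProduct.smul_tmul', TensorProduct.tmul_smul, smul_add]
      rw [← hX, ddadd, ddadd, ddadd, ddsmul, ddsmul, ddsmul, ddsmul, hS2]
      rw [sub_eq_zero]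
      simp only [add_mul, mul_add, smul_mul_assoc, mul_smul_comm,
        gK1 K P M hKP hMK, gK2 K H P M hKH hKP hMK,
        gH1 K H P M hKH hHP hMH, gH2 H P M hHP hMH,
        gP1 K P M hKP hMP, gP2 H P M hHP hMP,
        gM1 K P M hMK hMP, gM2 H P M hMH hMP]
      module
  · -- the closed form when a₃ = 0
    intro h3
    subst h3
    rw [hsch]
    module
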